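/- arXiv:1808.00038 — 2 statements merged into one kernel-verified Lean document; each statement's English description precedes it below -/
import Mathlib

section
/- Let χ_c, r be integers with r ≥ 0, let w₁,...,w_r be positive reals, and let ρ > 0. Define F(ρ) = 1 - ∑_{I ⊆ {1,...,r}} (-1)^{|I|} · B(⌊ρ - w_I⌋), where w_I = ∑_{i∈I} w_i, B(m) = C(m - χ_c + r, m) for m ≥ 0 (generalized binomial coefficient) and B(m) = 0 for m < 0. If w_i = 1 for all i, then F(ρ) = 1 - C(⌊ρ⌋ - χ_c, ⌊ρ⌋). -/
open Finset in
/-- `B(m) = C(m - χ_c + r, m)` for `m ≥ 0`, and `0` for `m < 0`. -/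
noncomputable def weightedB (χc : ℤ) (r : ℕ) (m : ℤ) : ℤ :=
  if m < 0 then 0 else Ring.choose (m - χc + r) m.toNat

open Finset in
/-- `F(ρ) = 1 - ∑_{I ⊆ {1,…,r}} (-1)^{|I|} B(⌊ρ - w_I⌋)` (Theorem 1.1). -/
noncomputable def weightedF (χc : ℤ) (r : ℕ) (w : Fin r → ℝ) (ρ : ℝ) : ℤ :=
  1 - ∑ I : Finset (Fin r), (-1) ^ I.card * weightedB χc r ⌊ρ - ∑ i ∈ I, w i⌋

/-! With unit weights `⌊ρ - w_I⌋ = ⌊ρ⌋ - |I|`, so the alternating sum over subsets is the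
`r`-th iterated backward difference of `B = B_r` at `⌊ρ⌋`, i.e. `(-1)^r Δ_[-1]^[r] B ⌊ρ⌋`.
Pascal's rule says that the backward difference of `B_{s+1}` is `B_s`, so `r` differences
leave `B_0(⌊ρ⌋) = C(⌊ρ⌋ - χ_c, ⌊ρ⌋)`. -/

open Finset fwdDiff

theorem sum_powerset_neg_one_pow_card_mul {α R : Type*} [CommRing R] (s : Finset α)
    (g : ℤ → R) (n : ℤ) :
    ∑ I ∈ s.powerset, (-1) ^ #I * g (n - #I) = (-1) ^ #s * (Δ_[-1])^[#s] g n := by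
  rw [sum_powerset_apply_card (fun k ↦ (-1) ^ k * g (n - k)), fwdDiff_iter_eq_sum_shift,
    mul_sum]
  refine sum_congr rfl fun k hk ↦ ?_
  obtain ⟨j, hj⟩ := Nat.exists_eq_add_of_le (Nat.lt_succ_iff.mp (mem_range.mp hk))
  have hsq : ((-1 : R) ^ j) * (-1) ^ j = 1 := by rw [← mul_pow]; simp
  rw [hj, Nat.add_sub_cancel_left, nsmul_eq_mul, zsmul_eq_mul, smul_neg, nsmul_one,
    ← sub_eq_add_neg, pow_add]
  push_cast
  linear_combination (-((k + j).choose k : R) * (-1) ^ k * g (n - k)) * hsq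

theorem fwdDiff_neg_one_weightedB_succ (χc : ℤ) (s : ℕ) :
    Δ_[-1] (weightedB χc (s + 1)) = -weightedB χc s := by
  ext m
  rw [fwdDiff, Pi.neg_apply, ← sub_eq_add_neg, eq_neg_iff_add_eq_zero]
  rcases lt_trichotomy m 0 with hm | rfl | hm
  · simp [weightedB, hm, show m - 1 < 0 by omega]
  · simp [weightedB]
  · obtain ⟨k, rfl⟩ : ∃ k : ℕ, m = k + 1 := ⟨m.toNat - 1, by omega⟩
    have hA : (k + 1 : ℤ) - χc + (s + 1 : ℕ) = ((k : ℤ) - χc + (s + 1 : ℕ)) + 1 := by ring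
    have hA' : (k : ℤ) - χc + (s + 1 : ℕ) = (k + 1 : ℤ) - χc + s := by push_cast; ring
    rw [add_sub_cancel_right]
    simp only [weightedB, if_neg (show ¬ ((k : ℤ) + 1 < 0) by omega),
      if_neg (show ¬ ((k : ℤ) < 0) by omega), hA, Int.toNat_natCast,
      show ((k : ℤ) + 1).toNat = k + 1 by omega, Ring.choose_succ_succ, hA']
    ring

theorem fwdDiff_neg_one_iter_weightedB (χc : ℤ) (s k : ℕ) :
    (Δ_[-1])^[k] (weightedB χc (s + k)) = (-1) ^ k • weightedB χc s := by
  induction k generalizing s with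
  | zero => simp
  | succ k ih =>
    rw [Function.iterate_succ_apply, ← add_assoc, fwdDiff_neg_one_weightedB_succ,
      ← neg_one_smul ℤ (weightedB χc (s + k)),
      fwdDiff_iter_const_smul, ih, smul_smul, pow_succ']

theorem sum_powerset_neg_one_pow_card_mul_weightedB {α : Type*} (χc : ℤ) (s : Finset α)
    (n : ℤ) : ∑ I ∈ s.powerset, (-1) ^ #I * weightedB χc #s (n - #I) = weightedB χc 0 n := by
  have hiter := fwdDiff_neg_one_iter_weightedB χc 0 #s
  rw [zero_add] at hiter
  rw [sum_powerset_neg_one_pow_card_mul, hiter, Pi.smul_apply, smul_eq_mul, ← mul_assoc,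
    ← pow_add, Even.neg_one_pow ⟨_, rfl⟩, one_mul]

theorem weightedF_all_weights_one_general (χc : ℤ) (r : ℕ) (w : Fin r → ℝ)
    (ρ : ℝ) (hρ : 0 < ρ) (h1 : ∀ i, w i = 1) :
    weightedF χc r w ρ = 1 - Ring.choose (⌊ρ⌋ - χc) ⌊ρ⌋.toNat := by
  have hfloor (I : Finset (Fin r)) : ⌊ρ - ∑ i ∈ I, w i⌋ = ⌊ρ⌋ - #I := by
    simp [h1, Int.floor_sub_natCast]
  have hsum := sum_powerset_neg_one_pow_card_mul_weightedB χc (univ : Finset (Fin r)) ⌊ρ⌋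
  rw [powerset_univ, card_univ, Fintype.card_fin] at hsum
  rw [weightedF]
  simp only [hfloor]
  rw [hsum, weightedB, if_neg (Int.floor_nonneg.mpr hρ.le).not_gt, Nat.cast_zero, add_zero]

/-- If all weights equal 1, the weighted formula reduces to the unweighted
formula `1 - C(⌊ρ⌋ - χ_c, ⌊ρ⌋)`. -/
theorem weightedF_all_weights_one (χc : ℤ) (r : ℕ) (w : Fin r → ℝ)
    (hw : ∀ i, 0 < w i) (ρ : ℝ) (hρ : 0 < ρ) (h1 : ∀ i, w i = 1) :
    weightedF χc r w ρ = 1 - Ring.choose (⌊ρ⌋ - χc) ⌊ρ⌋.toNat :=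
  weightedF_all_weights_one_general χc r w ρ hρ h1
end

section
/- Let χ_c, r be integers with r ≥ 1, ρ > 0 real, and weights w₁,...,w_r > 0 with w_r = 1. Define F_r(ρ; w₁,...,w_r; χ_c) = 1 - ∑_{I ⊆ {1,...,r}} (-1)^{|I|} · B_r(⌊ρ - w_I⌋) where B_r(m) = C(m - χ_c + r, m) for m ≥ 0 and 0 for m < 0. Then F_r(ρ; w₁,...,w_{r-1},1; χ_c) = F_{r-1}(ρ; w₁,...,w_{r-1}; χ_c), where F_{r-1} uses B_{r-1}(m) = C(m - χ_c + r - 1, m). -/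
theorem weightedB_succ (χc : ℤ) (r : ℕ) (m : ℤ) :
    weightedB χc (r + 1) m = weightedB χc (r + 1) (m - 1) + weightedB χc r m := by
  unfold weightedB
  rcases lt_trichotomy m 0 with hm | rfl | hm
  · simp [hm, show m - 1 < 0 by omega]
  · simp
  · rw [if_neg (by omega), if_neg (by omega), if_neg (by omega),
      show m.toNat = (m - 1).toNat + 1 by omega]
    push_cast
    rw [show m - χc + ((r : ℤ) + 1) = (m - χc + r) + 1 by ring,
      show m - 1 - χc + ((r : ℤ) + 1) = m - χc + r by ring, Ring.choose_succ_succ]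

namespace Finset

theorem sum_powerset_map {α β M : Type*} [AddCommMonoid M] (e : α ↪ β) (s : Finset α)
    (f : Finset β → M) :
    ∑ t ∈ (s.map e).powerset, f t = ∑ t ∈ s.powerset, f (t.map e) := by
  classical
  rw [map_eq_image, powerset_image, sum_image fun t _ u _ h => image_injective e.injective h]
  simp only [map_eq_image]

end Finset

namespace Fin

theorem sum_univ_finset_castSucc {M : Type*} [AddCommMonoid M] (n : ℕ)
    (f : Finset (Fin (n + 1)) → M) :
    ∑ I, f I = ∑ J : Finset (Fin n),
      (f (J.map castSuccEmb) + f (insert (last n) (J.map castSuccEmb))) := by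
  rw [← Finset.powerset_univ, univ_castSuccEmb, Finset.cons_eq_insert,
    Finset.sum_powerset_insert (by simp), Finset.sum_powerset_map, Finset.sum_powerset_map,
    ← Finset.sum_add_distrib, Finset.powerset_univ]

end Fin

theorem weightedF_drop_weight_one_general (χc : ℤ) (r : ℕ) (w : Fin (r + 1) → ℝ)
    (ρ : ℝ) (hlast : w (Fin.last r) = 1) :
    weightedF χc (r + 1) w ρ = weightedF χc r (w ∘ Fin.castSucc) ρ := by
  unfold weightedF
  rw [Fin.sum_univ_finset_castSucc]
  congr 1
  refine Finset.sum_congr rfl fun J _ => ?_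
  set m := ⌊ρ - ∑ i ∈ J, (w ∘ Fin.castSucc) i⌋
  have hsum : ∑ i ∈ J.map Fin.castSuccEmb, w i = ∑ i ∈ J, (w ∘ Fin.castSucc) i :=
    Finset.sum_map _ _ _
  have hlast_notMem : Fin.last r ∉ J.map Fin.castSuccEmb := by simp
  have hfloor : ⌊ρ - ∑ i ∈ insert (Fin.last r) (J.map Fin.castSuccEmb), w i⌋ = m - 1 := by
    rw [Finset.sum_insert hlast_notMem, hsum, hlast, ← Int.floor_sub_one]
    ring_nf
  rw [hfloor, Finset.card_insert_of_notMem hlast_notMem, Finset.card_map, hsum,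
    weightedB_succ χc r m]
  ring

/-- A singular point of weight 1 is not singular: it can be removed from the
formula of Theorem 1.1 without changing the value. -/
theorem weightedF_drop_weight_one (χc : ℤ) (r : ℕ) (w : Fin (r + 1) → ℝ)
    (hw : ∀ i, 0 < w i) (ρ : ℝ) (hρ : 0 < ρ) (hlast : w (Fin.last r) = 1) :
    weightedF χc (r + 1) w ρ = weightedF χc r (w ∘ Fin.castSucc) ρ :=
  weightedF_drop_weight_one_general χc r w ρ hlast
end
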